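/- arXiv:2312.13588 — 2 statements merged into one kernel-verified Lean document; each statement's English description precedes it below -/
import Mathlib

section
/- As n → ∞, f_{(0,1,1,0)}(n) ~ √(2n); that is, the limit as n → ∞ of f_{(0,1,1,0)}(n)/√(2n) equals 1. -/
open Finset

/-- A family `F` of subsets of `Fin n` satisfies the `α`-intersection pattern modulo 2
(for `α = (α_1, …, α_k)`, here 0-indexed: `α i` governs intersections of `i+1` distinct sets)
if every subfamily of `i+1` distinct sets has intersection of size `≡ α_i (mod 2)`. -/
def SatisfiesPattern (n k : ℕ) (α : Fin k → ZMod 2) (F : Finset (Finset (Fin n))) : Prop :=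
  ∀ i : Fin k, ∀ S : Finset (Finset (Fin n)), S ⊆ F → S.card = i.val + 1 →
    ((S.inf id).card : ZMod 2) = α i

/-- `maxPattern k α n` is `f_α(n)`, the maximum size of a family of subsets of `[n]`
satisfying the `α`-intersection pattern modulo 2. -/
noncomputable def maxPattern (k : ℕ) (α : Fin k → ZMod 2) (n : ℕ) : ℕ :=
  sSup {m : ℕ | ∃ F : Finset (Finset (Fin n)), SatisfiesPattern n k α F ∧ F.card = m}

/-! Upper bound: to each pair `{A, B}` of sets of a family `F` with pattern `(·, 1, 1, 0)` attach
the vector `(1_{A ∩ B}, 1_{{A, B}})` over `𝔽₂`, indexed by `[n] ⊔ F`. The inner product of the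
vectors of two pairs `p, q` is `|⋂ (p ∪ q)| + |p ∩ q|`, which the pattern makes `1` if `p = q`
and `0` otherwise, so these `C(|F|, 2)` vectors are independent and `C(|F|, 2) ≤ n + |F|`.

Lower bound: for `m = 4j + 5` with `C(m, 2) ≤ n`, take the pairs of `[m]` as ground set and let
the `i`-th set consist of the pairs avoiding `i`. Any `s` of these sets meet in `C(m - s, 2)`
pairs, which is even, odd, odd, even for `s = 1, 2, 3, 4`.

Hence `f(n) = √(2n) + O(1)`. -/

open Filter Asymptotics Topology

theorem Matrix.card_le_card_of_mul_eq_one {m n R : Type*} [Fintype m] [Fintype n]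
    [DecidableEq m] [CommSemiring R] [StrongRankCondition R] (A : Matrix m n R)
    (B : Matrix n m R) (h : A * B = 1) : Fintype.card m ≤ Fintype.card n := by
  rw [← Matrix.rank_one (R := R), ← h]
  exact (A.rank_mul_le_left B).trans A.rank_le_card_width

theorem Nat.succ_choose_two (m : ℕ) : (m + 1).choose 2 = m.choose 2 + m := by
  rw [Nat.choose_succ_succ', Nat.choose_one_right, add_comm]

theorem Nat.cast_choose_two_add_four_mul (m j : ℕ) :
    (((m + 4 * j).choose 2 : ℕ) : ZMod 2) = m.choose 2 := by
  induction j with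
  | zero => rfl
  | succ j ih =>
    rw [← ih, show m + 4 * (j + 1) = m + 4 * j + 1 + 1 + 1 + 1 by ring]
    simp only [Nat.succ_choose_two]
    push_cast
    ring_nf
    reduce_mod_char

theorem tendsto_div_nhds_one_of_sub_isBigO_one {ι : Type*} {l : Filter ι} {f g : ι → ℝ}
    (hg : Tendsto g l atTop) (hfg : (f - g) =O[l] fun _ => (1 : ℝ)) :
    Tendsto (f / g) l (𝓝 1) :=
  (isEquivalent_iff_tendsto_one (hg.eventually_ne_atTop 0)).1 <|
    hfg.trans_isLittleO <| (isLittleO_one_left_iff ℝ).2 <| tendsto_norm_atTop_atTop.comp hg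

section MaxPattern

variable {n k : ℕ} {α : Fin k → ZMod 2}

theorem satisfiesPattern_empty : SatisfiesPattern n k α ∅ := fun i S hS hcard => by
  simp [subset_empty.1 hS] at hcard

theorem bddAbove_card_satisfiesPattern :
    BddAbove {m : ℕ | ∃ F : Finset (Finset (Fin n)), SatisfiesPattern n k α F ∧ #F = m} := by
  refine ⟨Fintype.card (Finset (Fin n)), ?_⟩
  rintro _ ⟨F, -, rfl⟩
  exact card_le_univ F

theorem SatisfiesPattern.card_le_maxPattern {F : Finset (Finset (Fin n))}
    (hF : SatisfiesPattern n k α F) : #F ≤ maxPattern k α n :=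
  le_csSup bddAbove_card_satisfiesPattern ⟨F, hF, rfl⟩

theorem exists_satisfiesPattern_card_eq_maxPattern :
    ∃ F : Finset (Finset (Fin n)), SatisfiesPattern n k α F ∧ #F = maxPattern k α n :=
  show maxPattern k α n ∈ _ from
    Nat.sSup_mem ⟨0, ∅, satisfiesPattern_empty, rfl⟩ bddAbove_card_satisfiesPattern

end MaxPattern

section UpperBound

variable {n : ℕ} (F : Finset (Finset (Fin n)))

open Matrix

def pairIncidence : Matrix (F.powersetCard 2) (Fin n ⊕ F) (ZMod 2) :=
  fromCols (of fun p x => if x ∈ p.1.inf id then 1 else 0)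
    (of fun p A => if A.1 ∈ p.1 then 1 else 0)

theorem pairIncidence_mul_transpose_apply (p q : F.powersetCard 2) :
    (pairIncidence F * (pairIncidence F)ᵀ) p q = #((p.1 ∪ q.1).inf id) + #(p.1 ∩ q.1) := by
  have hp := (mem_powersetCard.1 p.2).1
  rw [pairIncidence, transpose_fromCols, fromCols_mul_fromRows, Matrix.add_apply, mul_apply,
    mul_apply]
  simp only [transpose_apply, of_apply, ite_zero_mul_ite_zero, mul_one]
  rw [sum_coe_sort F fun A => ((if A ∈ p.1 ∧ A ∈ q.1 then 1 else 0) : ZMod 2)]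
  simp only [sum_boole, inf_union, inf_eq_inter, ← mem_inter, filter_mem_eq_inter, univ_inter,
    inter_eq_right.2 (inter_subset_left.trans hp)]

variable {F}

theorem pairIncidence_mul_transpose {a : ZMod 2} (hF : SatisfiesPattern n 4 ![a, 1, 1, 0] F) :
    pairIncidence F * (pairIncidence F)ᵀ = 1 := by
  ext p q
  obtain ⟨hpF, hp⟩ := mem_powersetCard.1 p.2
  obtain ⟨hqF, hq⟩ := mem_powersetCard.1 q.2
  have hunion : #(p.1 ∪ q.1) + #(p.1 ∩ q.1) = 4 := by rw [card_union_add_card_inter, hp, hq]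
  have hpattern (i : Fin 4) (hi : #(p.1 ∪ q.1) = i + 1) :=
    hF i _ (union_subset hpF hqF) hi
  rw [pairIncidence_mul_transpose_apply]
  rcases eq_or_ne p q with rfl | hpq
  · rw [one_apply_eq, inter_self, hpattern 1 (by rw [union_self, hp]; rfl), hp]
    rfl
  · have hinter : #(p.1 ∩ q.1) < 2 := by
      by_contra! h
      exact hpq (Subtype.ext ((eq_of_subset_of_card_le inter_subset_left (by omega)).symm.trans
        (eq_of_subset_of_card_le inter_subset_right (by omega))))
    rw [one_apply_ne hpq]
    interval_cases #(p.1 ∩ q.1)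
    · rw [hpattern 3 (by omega)]
      rfl
    · rw [hpattern 2 (by omega)]
      rfl

theorem SatisfiesPattern.choose_two_card_le {a : ZMod 2}
    (hF : SatisfiesPattern n 4 ![a, 1, 1, 0] F) : (#F).choose 2 ≤ n + #F := by
  simpa only [Fintype.card_coe, card_powersetCard, Fintype.card_sum, Fintype.card_fin] using
    card_le_card_of_mul_eq_one _ _ (pairIncidence_mul_transpose hF)

end UpperBound

section Construction

variable {m n : ℕ}

def pairsAvoiding (I : Finset (Fin m)) : Finset {p : Finset (Fin m) // #p = 2} :=
  {p | Disjoint I p.1}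

theorem card_pairsAvoiding (I : Finset (Fin m)) : #(pairsAvoiding I) = (m - #I).choose 2 := by
  have : (pairsAvoiding I).map (Function.Embedding.subtype _) = Iᶜ.powersetCard 2 := by
    ext s
    simp [pairsAvoiding, mem_powersetCard, subset_compl_iff_disjoint_left, and_comm]
  rw [← card_map, this, card_powersetCard, card_compl, Fintype.card_fin]

theorem inf'_pairsAvoiding_singleton {I : Finset (Fin m)} (hI : I.Nonempty) :
    I.inf' hI (fun i => pairsAvoiding {i}) = pairsAvoiding I := by
  ext p
  simp [pairsAvoiding, mem_inf', disjoint_left]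

variable (φ : {p : Finset (Fin m) // #p = 2} ↪ Fin n)

def embeddedPairsAvoiding (i : Fin m) : Finset (Fin n) := (pairsAvoiding {i}).map φ

theorem card_inf_embeddedPairsAvoiding {I : Finset (Fin m)} (hI : I.Nonempty) :
    #(I.inf (embeddedPairsAvoiding φ)) = (m - #I).choose 2 := by
  have : embeddedPairsAvoiding φ = Finset.map φ ∘ fun i => pairsAvoiding {i} := rfl
  rw [← inf'_eq_inf hI, this, ← apply_inf'_eq_inf'_comp hI _ fun s t => map_inter s t,
    inf'_pairsAvoiding_singleton, card_map, card_pairsAvoiding]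

theorem embeddedPairsAvoiding_injective (hm : 3 ≤ m) :
    Function.Injective (embeddedPairsAvoiding φ) := by
  intro a b hab
  by_contra hne
  obtain ⟨c, hc⟩ : ({a, b}ᶜ : Finset (Fin m)).Nonempty := by
    rw [← card_pos, card_compl, Fintype.card_fin]
    have := card_le_two (a := a) (b := b)
    omega
  simp only [mem_compl, mem_insert, mem_singleton, not_or] at hc
  have hbc : #({b, c} : Finset (Fin m)) = 2 := card_pair (Ne.symm hc.2)
  have hmem : φ ⟨{b, c}, hbc⟩ ∈ embeddedPairsAvoiding φ a := by
    simp [embeddedPairsAvoiding, pairsAvoiding, hne, Ne.symm hc.1]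
  rw [hab] at hmem
  simp [embeddedPairsAvoiding, pairsAvoiding] at hmem

theorem exists_family_card_inf_eq_choose (hm : 3 ≤ m) (hn : m.choose 2 ≤ n) :
    ∃ F : Finset (Finset (Fin n)), #F = m ∧
      ∀ S ⊆ F, S.Nonempty → #(S.inf id) = (m - #S).choose 2 := by
  obtain ⟨φ⟩ : Nonempty ({p : Finset (Fin m) // #p = 2} ↪ Fin n) :=
    Function.Embedding.nonempty_of_card_le (by simpa [Fintype.card_finset_len] using hn)
  have hinj := embeddedPairsAvoiding_injective φ hm
  refine ⟨univ.image (embeddedPairsAvoiding φ), ?_, fun S hS hSne => ?_⟩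
  · rw [card_image_of_injective _ hinj, card_univ, Fintype.card_fin]
  · obtain ⟨I, -, rfl⟩ := subset_image_iff.1 hS
    rw [inf_image, card_image_of_injective _ hinj]
    exact card_inf_embeddedPairsAvoiding φ (image_nonempty.1 hSne)

end Construction

theorem exists_satisfiesPattern_0110_card_eq {n : ℕ} (j : ℕ) (hn : (4 * j + 5).choose 2 ≤ n) :
    ∃ F, SatisfiesPattern n 4 ![0, 1, 1, 0] F ∧ #F = 4 * j + 5 := by
  obtain ⟨F, hcard, hinf⟩ := exists_family_card_inf_eq_choose (by omega) hn
  refine ⟨F, fun i S hS hSi => ?_, hcard⟩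
  rw [hinf S hS (card_pos.1 (by omega)), hSi,
    show 4 * j + 5 - (i + 1) = (4 - i) + 4 * j by omega, Nat.cast_choose_two_add_four_mul]
  fin_cases i <;> rfl

theorem maxPattern_0110_le (n : ℕ) : (maxPattern 4 ![0, 1, 1, 0] n : ℝ) ≤ √(2 * n) + 3 := by
  obtain ⟨F, hF, hcard⟩ :=
    exists_satisfiesPattern_card_eq_maxPattern (n := n) (α := ![0, 1, 1, 0])
  have hchoose : (((#F).choose 2 : ℕ) : ℝ) ≤ n + #F := by
    exact_mod_cast hF.choose_two_card_le
  rw [Nat.cast_choose_two] at hchoose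
  rw [← hcard]
  by_contra! h
  nlinarith [Real.sq_sqrt (by positivity : (0 : ℝ) ≤ 2 * n), Real.sqrt_nonneg (2 * n)]

theorem sqrt_sub_le_maxPattern_0110 {n : ℕ} (hn : 13 ≤ n) :
    √(2 * n) - 4 ≤ maxPattern 4 ![0, 1, 1, 0] n := by
  set s := Nat.sqrt (2 * n)
  have hs : 5 ≤ s := Nat.le_sqrt.2 (by omega)
  set j := (s - 5) / 4
  have hchoose : (4 * j + 5).choose 2 ≤ n := by
    rw [Nat.choose_two_right]
    exact Nat.div_le_of_le_mul <|
      (Nat.mul_le_mul (by omega) (by omega)).trans (Nat.sqrt_le (2 * n))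
  obtain ⟨F, hF, hcard⟩ := exists_satisfiesPattern_0110_card_eq j hchoose
  have hsqrt : √(2 * n) < s + 1 := by exact_mod_cast Real.real_sqrt_lt_nat_sqrt_succ (a := 2 * n)
  have hs_le : (s : ℝ) ≤ 4 * j + 8 := by exact_mod_cast (by omega : s ≤ 4 * j + 8)
  have hmax : (4 * j + 5 : ℝ) ≤ maxPattern 4 ![0, 1, 1, 0] n := by
    exact_mod_cast hcard ▸ hF.card_le_maxPattern
  linarith

theorem f_0110_asymp :
    Filter.Tendsto (fun n : ℕ => (maxPattern 4 ![0, 1, 1, 0] n : ℝ) / Real.sqrt (2 * n))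
      Filter.atTop (nhds 1) := by
  have hsqrt : Tendsto (fun n : ℕ => √(2 * n)) atTop atTop :=
    Real.tendsto_sqrt_atTop.comp (tendsto_natCast_atTop_atTop.const_mul_atTop two_pos)
  refine tendsto_div_nhds_one_of_sub_isBigO_one hsqrt (IsBigO.of_bound 4 ?_)
  filter_upwards [eventually_ge_atTop 13] with n hn
  rw [norm_one, mul_one, Real.norm_eq_abs, abs_le, Pi.sub_apply]
  constructor <;> linarith [maxPattern_0110_le n, sqrt_sub_le_maxPattern_0110 hn]
end

section
/- For every n ≥ 2, the maximum size of a family of subsets of [n] satisfying the (1,0,1)-intersection pattern modulo 2 equals n when n is even and equals n − 1 when n is odd; that is, f_{(1,0,1)}(n) = n for even n and f_{(1,0,1)}(n) = n − 1 for odd n ≥ 3. -/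
open Finset

/-!
The characteristic vectors of the members of a `(1,0,1)`-family are orthonormal for the dot
product on `(ZMod 2)ⁿ`: sizes are odd and pairwise intersections even. Hence they are linearly
independent and the family has at most `n` members. If it has exactly `n`, they form an orthonormal
basis, and Parseval's identity for `x = 1_{A ∩ B}`, `y = 1` reads
`|A ∩ B| ≡ ∑_C |A ∩ B ∩ C| |C|`, i.e. `0 ≡ n - 2` because triple intersections are odd;
so `n` is even.

Conversely, for `|U| = m` even the `m` sets `U \ {i}`, `i ∈ U`, have `j`-fold intersections of
size `m - j ≡ j (mod 2)`; take `U = [n]`, resp. `U` = `[n]` minus one point.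
-/

section Orthonormal

variable {ι m K : Type*} [Fintype ι] [DecidableEq ι] [Fintype m] {v : ι → m → K}

theorem linearIndependent_of_dotProduct_eq_ite [CommRing K]
    (hv : ∀ i j, v i ⬝ᵥ v j = if i = j then 1 else 0) : LinearIndependent K v := by
  rw [Fintype.linearIndependent_iff]
  intro g hg j
  simpa [sum_dotProduct, smul_dotProduct, hv] using congrArg (· ⬝ᵥ v j) hg

theorem dotProduct_eq_sum_of_dotProduct_eq_ite [Field K]
    (hv : ∀ i j, v i ⬝ᵥ v j = if i = j then 1 else 0) (hcard : Fintype.card ι = Fintype.card m)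
    (x y : m → K) : x ⬝ᵥ y = ∑ i, (x ⬝ᵥ v i) * (y ⬝ᵥ v i) := by
  have hspan : Submodule.span K (Set.range v) = ⊤ :=
    (linearIndependent_of_dotProduct_eq_ite hv).span_eq_top_of_card_eq_finrank'
      (by simp [hcard])
  have hy : y ∈ Submodule.span K (Set.range v) := hspan ▸ Submodule.mem_top
  induction hy using Submodule.span_induction with
  | mem _ h =>
    obtain ⟨j, rfl⟩ := h
    simp [dotProduct_comm (v j), hv]
  | zero => simp
  | add y z _ _ hy hz => simp [dotProduct_add, add_dotProduct, hy, hz, mul_add, sum_add_distrib]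
  | smul c y _ hy => simp [dotProduct_smul, smul_dotProduct, hy, mul_sum, mul_left_comm]

end Orthonormal

section CharVec

variable {α R : Type*} [Fintype α] [DecidableEq α] [Semiring R]

def charVec (A : Finset α) : α → R := fun t => if t ∈ A then 1 else 0

theorem charVec_dotProduct (A B : Finset α) :
    (charVec A ⬝ᵥ charVec B : R) = #(A ∩ B) := by
  simp [dotProduct, charVec, ← ite_and, ← mem_inter, and_comm]

theorem charVec_dotProduct_one (A : Finset α) : (charVec A ⬝ᵥ 1 : R) = #A := by
  simp [dotProduct, charVec]

end CharVec

namespace SatisfiesPattern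

variable {n : ℕ} {F : Finset (Finset (Fin n))} {A B C : Finset (Fin n)}

theorem card_odd (hF : SatisfiesPattern n 3 ![1, 0, 1] F) (hA : A ∈ F) : (#A : ZMod 2) = 1 := by
  simpa using hF 0 {A} (by simpa using hA) (by simp)

theorem card_inter_even (hF : SatisfiesPattern n 3 ![1, 0, 1] F) (hA : A ∈ F) (hB : B ∈ F)
    (hAB : A ≠ B) : (#(A ∩ B) : ZMod 2) = 0 := by
  simpa [inf_insert, inf_eq_inter] using
    hF 1 {A, B} (by simp [insert_subset_iff, hA, hB]) (card_pair hAB)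

theorem card_inter_inter_odd (hF : SatisfiesPattern n 3 ![1, 0, 1] F) (hA : A ∈ F) (hB : B ∈ F)
    (hC : C ∈ F) (hAB : A ≠ B) (hAC : A ≠ C) (hBC : B ≠ C) : (#(A ∩ B ∩ C) : ZMod 2) = 1 := by
  have hcard : #{A, B, C} = 3 := by
    rw [card_insert_of_notMem (by simp [hAB, hAC]), card_pair hBC]
  simpa [inf_insert, inf_eq_inter, inter_assoc] using
    hF 2 {A, B, C} (by simp [insert_subset_iff, hA, hB, hC]) hcard

theorem charVec_dotProduct_eq_ite (hF : SatisfiesPattern n 3 ![1, 0, 1] F) (A B : F) :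
    (charVec (A : Finset (Fin n)) ⬝ᵥ charVec (B : Finset (Fin n)) : ZMod 2) =
      if A = B then 1 else 0 := by
  rw [charVec_dotProduct]
  split_ifs with h
  · rw [h, inter_self, hF.card_odd B.2]
  · exact hF.card_inter_even A.2 B.2 (Subtype.coe_ne_coe.mpr h)

theorem card_le (hF : SatisfiesPattern n 3 ![1, 0, 1] F) : #F ≤ n := by
  simpa using (linearIndependent_of_dotProduct_eq_ite (K := ZMod 2)
    hF.charVec_dotProduct_eq_ite).fintype_card_le_finrank

theorem sum_card_inter_inter (hF : SatisfiesPattern n 3 ![1, 0, 1] F) (hA : A ∈ F) (hB : B ∈ F)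
    (hAB : A ≠ B) : ∑ C ∈ F, (#(A ∩ B ∩ C) : ZMod 2) = (#F - 2 : ℕ) := by
  have hB' : B ∈ F.erase A := mem_erase.mpr ⟨hAB.symm, hB⟩
  have hrest : ∀ C ∈ (F.erase A).erase B, (#(A ∩ B ∩ C) : ZMod 2) = 1 := by
    intro C hC
    obtain ⟨hCB, hCA, hC⟩ : C ≠ B ∧ C ≠ A ∧ C ∈ F := by simpa using hC
    exact hF.card_inter_inter_odd hA hB hC hAB hCA.symm hCB.symm
  rw [← add_sum_erase F _ hA, ← add_sum_erase _ _ hB', sum_congr rfl hrest,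
    inter_right_comm, inter_self, inter_assoc, inter_self, hF.card_inter_even hA hB hAB,
    sum_const, card_erase_of_mem hB', card_erase_of_mem hA]
  simp [Nat.sub_sub]

theorem even_of_card_eq (hF : SatisfiesPattern n 3 ![1, 0, 1] F) (hcard : #F = n) (hn : 2 ≤ n) :
    Even n := by
  obtain ⟨A, hA, B, hB, hAB⟩ := one_lt_card.mp (by omega : 1 < #F)
  have parseval := dotProduct_eq_sum_of_dotProduct_eq_ite (x := charVec (A ∩ B)) (y := 1)
    hF.charVec_dotProduct_eq_ite (by simpa using hcard)
  simp only [charVec_dotProduct, charVec_dotProduct_one, dotProduct_comm 1] at parseval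
  rw [sum_coe_sort F (fun C => (#(A ∩ B ∩ C) : ZMod 2) * #C),
    sum_congr rfl fun C hC => by rw [hF.card_odd hC, mul_one], hF.sum_card_inter_inter hA hB hAB,
    hF.card_inter_even hA hB hAB, eq_comm, ZMod.natCast_eq_zero_iff_even, hcard] at parseval
  exact (Nat.even_sub hn).mp parseval |>.mpr even_two

end SatisfiesPattern

section Erasures

variable {α : Type*} [DecidableEq α]

theorem card_image_erase (U : Finset α) : #(U.image U.erase) = #U :=
  card_image_of_injOn U.erase_injOn

theorem inf_image_erase [Fintype α] {T U : Finset α} (hT : T.Nonempty) :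
    (T.image U.erase).inf id = U \ T := by
  ext x
  simp only [mem_inf, mem_image, id, forall_exists_index, and_imp, forall_apply_eq_imp_iff₂,
    mem_erase, mem_sdiff]
  obtain ⟨i, hi⟩ := hT
  exact ⟨fun h => ⟨(h i hi).2, fun hx => (h x hx).1 rfl⟩,
    fun ⟨hxU, hxT⟩ j hj => ⟨fun hxj => hxT (hxj ▸ hj), hxU⟩⟩

theorem satisfiesPattern_image_erase {n : ℕ} (U : Finset (Fin n)) (hU : Even #U) :
    SatisfiesPattern n 3 ![1, 0, 1] (U.image U.erase) := by
  intro i S hS hSi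
  obtain ⟨T, hTU, rfl⟩ := subset_image_iff.mp hS
  rw [card_image_of_injOn (U.erase_injOn.mono hTU)] at hSi
  have hT : T.Nonempty := card_pos.mp (by omega)
  rw [inf_image_erase hT, card_sdiff_of_subset hTU, Nat.cast_sub (card_le_card hTU),
    hU.natCast_zmod_two, zero_sub, ZMod.neg_eq_self_mod_two, hSi]
  fin_cases i <;> rfl

end Erasures

theorem maxPattern_eq {k n m : ℕ} {α : Fin k → ZMod 2} {F : Finset (Finset (Fin n))}
    (hbound : ∀ G, SatisfiesPattern n k α G → #G ≤ m) (hF : SatisfiesPattern n k α F)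
    (hFm : #F = m) : maxPattern k α n = m :=
  IsGreatest.csSup_eq ⟨⟨F, hF, hFm⟩, by rintro _ ⟨G, hG, rfl⟩; exact hbound G hG⟩

theorem f_101 (n : ℕ) (hn : 2 ≤ n) :
    (Even n → maxPattern 3 ![1, 0, 1] n = n) ∧
    (Odd n → maxPattern 3 ![1, 0, 1] n = n - 1) := by
  refine ⟨fun heven => ?_, fun hodd => ?_⟩
  · exact maxPattern_eq (fun G hG => hG.card_le)
      (satisfiesPattern_image_erase univ (by simpa using heven)) (by simp [card_image_erase])
  · have hU : #(univ.erase (⟨0, hodd.pos⟩ : Fin n)) = n - 1 := by simp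
    refine maxPattern_eq (fun G hG => ?_) (satisfiesPattern_image_erase _ ?_)
      (by rw [card_image_erase, hU])
    · have hne : #G ≠ n := fun h => Nat.not_even_iff_odd.mpr hodd (hG.even_of_card_eq h hn)
      have := hG.card_le
      omega
    · rw [hU]
      exact Nat.Odd.sub_odd hodd odd_one
end
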